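/- arXiv:1312.0098 — 2 statements merged into one kernel-verified Lean document; each statement's English description precedes it below -/
import Mathlib

section
/- Let k ≥ 2 and let G_1, G_2, ..., G_k be connected graphs, each with at least 2 vertices, and let G* = G_1 □ G_2 □ ... □ G_k be their iterated Cartesian product. Then sdiam_3(G*) = Σ_{i=1}^{k} sdiam_3(G_i). -/
open SimpleGraph

/-- An edge coloring `c` of `G` is a 3-rainbow coloring if every set of at most three
vertices is contained in a rainbow tree of `G`, formalized as a connected subgraph of `G`
on whose edge set the coloring `c` is injective. -/
def IsRainbowColoring3 {V : Type*} (G : SimpleGraph V) (c : Sym2 V → ℕ) : Prop :=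
  ∀ S : Set V, S.ncard ≤ 3 →
    ∃ T : G.Subgraph, T.Connected ∧ S ⊆ T.verts ∧ Set.InjOn c T.edgeSet

/-- The 3-rainbow index `rx₃(G)`: the minimum number of colors in a 3-rainbow coloring. -/
noncomputable def rx3 {V : Type*} (G : SimpleGraph V) : ℕ :=
  sInf {n | ∃ c : Sym2 V → ℕ, (∀ e ∈ G.edgeSet, c e < n) ∧ IsRainbowColoring3 G c}

/-- The Steiner distance of a vertex set `S` of `G`: the minimum number of edges of a
tree (connected subgraph) of `G` containing `S`. -/
noncomputable def steinerDist {V : Type*} (G : SimpleGraph V) (S : Set V) : ℕ :=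
  sInf {n | ∃ T : G.Subgraph, T.Connected ∧ S ⊆ T.verts ∧ T.edgeSet.ncard = n}

/-- The 3-Steiner diameter of `G`: the maximum Steiner distance over vertex sets of
at most 3 vertices. -/
noncomputable def sdiam3 {V : Type*} (G : SimpleGraph V) : ℕ :=
  sSup {n | ∃ S : Set V, S.ncard ≤ 3 ∧ steinerDist G S = n}

/-- The rainbow connection number `rc(G)`: the minimum number of colors in an edge coloring
of `G` such that every two vertices are joined by a path whose edges all receive
distinct colors. -/
noncomputable def rcIndex {V : Type*} (G : SimpleGraph V) : ℕ :=
  sInf {n | ∃ c : Sym2 V → ℕ, (∀ e ∈ G.edgeSet, c e < n) ∧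
    ∀ u v : V, ∃ p : G.Walk u v, p.IsPath ∧ (p.edges.map c).Nodup}

/-- The lexicographic product `G[H]` of simple graphs. -/
def lexProd {α β : Type*} (G : SimpleGraph α) (H : SimpleGraph β) :
    SimpleGraph (α × β) where
  Adj x y := G.Adj x.1 y.1 ∨ (x.1 = y.1 ∧ H.Adj x.2 y.2)
  symm := by
    constructor
    rintro x y (h | ⟨h1, h2⟩)
    · exact Or.inl h.symm
    · exact Or.inr ⟨h1.symm, h2.symm⟩
  loopless := by
    constructor
    rintro x (h | ⟨-, h⟩)
    · exact G.irrefl h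
    · exact H.irrefl h

/-- The strong product `G ⊠ H` of simple graphs. -/
def strongProd {α β : Type*} (G : SimpleGraph α) (H : SimpleGraph β) :
    SimpleGraph (α × β) where
  Adj x y := x ≠ y ∧ (x.1 = y.1 ∨ G.Adj x.1 y.1) ∧ (x.2 = y.2 ∨ H.Adj x.2 y.2)
  symm := by
    constructor
    rintro x y ⟨hne, h1, h2⟩
    exact ⟨hne.symm, h1.imp Eq.symm (fun h => h.symm), h2.imp Eq.symm (fun h => h.symm)⟩
  loopless := ⟨fun x h => h.1 rfl⟩

/-- The join `G ∨ H` of two simple graphs: the disjoint union of `G` and `H` together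
with all edges joining a vertex of `G` to a vertex of `H`. -/
def joinGraph {α β : Type*} (G : SimpleGraph α) (H : SimpleGraph β) :
    SimpleGraph (α ⊕ β) where
  Adj x y :=
    match x, y with
    | Sum.inl a, Sum.inl b => G.Adj a b
    | Sum.inr a, Sum.inr b => H.Adj a b
    | Sum.inl _, Sum.inr _ => True
    | Sum.inr _, Sum.inl _ => True
  symm := by
    constructor
    rintro (a | a) (b | b) h
    · exact h.symm
    · trivial
    · trivial
    · exact h.symm
  loopless := by
    constructor
    rintro (a | a) h
    · exact G.irrefl h
    · exact H.irrefl h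

/-- The Cartesian product `G₁ □ G₂ □ ⋯ □ G_k` of a family of simple graphs
(the Cartesian product is associative, so this is the iterated Cartesian product). -/
def boxProdFamily {k : ℕ} {V : Fin k → Type*} (G : ∀ i, SimpleGraph (V i)) :
    SimpleGraph (∀ i, V i) where
  Adj x y := ∃ i, (G i).Adj (x i) (y i) ∧ ∀ j, j ≠ i → x j = y j
  symm := by
    constructor
    rintro x y ⟨i, hadj, heq⟩
    exact ⟨i, hadj.symm, fun j hj => (heq j hj).symm⟩
  loopless := by
    constructor
    rintro x ⟨i, hadj, -⟩
    exact (G i).irrefl hadj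

section SteinerHelpers

open SimpleGraph

variable {W : Type*}

lemma steinerDist_le_of_subgraph {G : SimpleGraph W} {S : Set W} {T : G.Subgraph}
    (hT : T.Connected) (hS : S ⊆ T.verts) : steinerDist G S ≤ T.edgeSet.ncard :=
  Nat.sInf_le ⟨T, hT, hS, rfl⟩

lemma steinerDist_le_ncard_edgeSet (G : SimpleGraph W) [Fintype W] (S : Set W) :
    steinerDist G S ≤ G.edgeSet.ncard := by
  classical
  rw [steinerDist]
  rcases Set.eq_empty_or_nonempty
      {n | ∃ T : G.Subgraph, T.Connected ∧ S ⊆ T.verts ∧ T.edgeSet.ncard = n} with h | h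
  · simp [h]
  · obtain ⟨T, _, _, hn⟩ := Nat.sInf_mem h
    rw [← hn]
    exact Set.ncard_le_ncard T.edgeSet_subset (Set.toFinite _)

lemma bddAbove_sdiam3_set (G : SimpleGraph W) [Fintype W] :
    BddAbove {n | ∃ S : Set W, S.ncard ≤ 3 ∧ steinerDist G S = n} := by
  refine ⟨G.edgeSet.ncard, ?_⟩
  rintro n ⟨S, -, rfl⟩
  exact steinerDist_le_ncard_edgeSet G S

lemma steinerDist_le_sdiam3 (G : SimpleGraph W) [Fintype W] {S : Set W} (hS : S.ncard ≤ 3) :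
    steinerDist G S ≤ sdiam3 G :=
  le_csSup (bddAbove_sdiam3_set G) ⟨S, hS, rfl⟩

lemma sdiam3_le (G : SimpleGraph W) {n : ℕ}
    (h : ∀ S : Set W, S.ncard ≤ 3 → steinerDist G S ≤ n) : sdiam3 G ≤ n := by
  refine csSup_le ⟨steinerDist G ∅, ∅, by simp, rfl⟩ ?_
  rintro m ⟨S, hS, rfl⟩
  exact h S hS

lemma exists_sdiam3_witness (G : SimpleGraph W) [Fintype W] :
    ∃ S : Set W, S.ncard ≤ 3 ∧ steinerDist G S = sdiam3 G := by
  have h := Nat.sSup_mem (s := {n | ∃ S : Set W, S.ncard ≤ 3 ∧ steinerDist G S = n})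
    ⟨steinerDist G ∅, ∅, by simp, rfl⟩ (bddAbove_sdiam3_set G)
  exact h

lemma ncard_triple_le (a b c : W) : ({a, b, c} : Set W).ncard ≤ 3 := by
  refine le_trans (Set.ncard_insert_le _ _) ?_
  have := Set.ncard_insert_le b ({c} : Set W)
  simp only [Set.ncard_singleton] at this ⊢
  omega

lemma exists_three_superset [Nonempty W] {S : Set W} (hS : S.ncard ≤ 3) (hfin : S.Finite) :
    ∃ a b c : W, S ⊆ {a, b, c} := by
  rcases S.eq_empty_or_nonempty with rfl | ⟨a, ha⟩
  · obtain ⟨a⟩ := ‹Nonempty W›; exact ⟨a, a, a, by simp⟩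
  rcases (S \ {a}).eq_empty_or_nonempty with h1 | ⟨b, hb⟩
  · refine ⟨a, a, a, (Set.diff_eq_empty.mp h1).trans ?_⟩
    intro x hx; simp only [Set.mem_singleton_iff] at hx; simp [hx]
  rcases (S \ {a, b}).eq_empty_or_nonempty with h2 | ⟨c, hc⟩
  · refine ⟨a, b, b, (Set.diff_eq_empty.mp h2).trans ?_⟩
    intro x hx
    rcases hx with rfl | hx
    · simp
    · simp only [Set.mem_singleton_iff] at hx; simp [hx]
  · refine ⟨a, b, c, fun x hx => ?_⟩
    by_contra hx3
    simp only [Set.mem_insert_iff, Set.mem_singleton_iff, not_or] at hx3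
    obtain ⟨hxa, hxb, hxc⟩ := hx3
    obtain ⟨hbS, hba⟩ : b ∈ S ∧ b ≠ a := by simpa using hb
    obtain ⟨hcS, hcab⟩ : c ∈ S ∧ ¬(c = a ∨ c = b) := by simpa using hc
    push_neg at hcab
    have hsub : ({x, a, b, c} : Set W) ⊆ S := by
      intro y hy
      rcases hy with rfl | rfl | rfl | rfl <;> assumption
    have h4 : ({x, a, b, c} : Set W).ncard = 4 := by
      rw [Set.ncard_insert_of_notMem (by simp [hxa, hxb, hxc]) (Set.toFinite _),
        Set.ncard_insert_of_notMem (by simp [Ne.symm hba, Ne.symm hcab.1]) (Set.toFinite _),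
        Set.ncard_insert_of_notMem (by simp [Ne.symm hcab.2]) (Set.toFinite _),
        Set.ncard_singleton]
    have := Set.ncard_le_ncard hsub hfin
    omega

end SteinerHelpers

section Median

open SimpleGraph

variable {W : Type*}

lemma exists_first_hit {G : SimpleGraph W} (P : W → Prop) :
    ∀ {z x : W} (q : G.Walk z x), q.IsPath → P x →
    ∃ m, P m ∧ ∃ q₁ : G.Walk z m, q₁.IsPath ∧ (∀ e ∈ q₁.edges, e ∈ q.edges) ∧
      (∀ v ∈ q₁.support, v ∈ q.support) ∧ (∀ v ∈ q₁.support, P v → v = m) := by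
  intro z x q
  induction q with
  | nil =>
    intro _ hx
    exact ⟨_, hx, Walk.nil, by simp, by simp, by simp,
      by intro v hv _; simpa using hv⟩
  | @cons z z' x h p ih =>
    intro hq hx
    by_cases hz : P z
    · exact ⟨z, hz, Walk.nil, by simp, by simp, by simp,
        by intro v hv _; simpa using hv⟩
    · obtain ⟨m, hm, q₁, hq₁, hedges, hsupp, hlast⟩ := ih hq.of_cons hx
      refine ⟨m, hm, Walk.cons h q₁, ?_, ?_, ?_, ?_⟩
      · rw [Walk.cons_isPath_iff]
        refine ⟨hq₁, fun hzs => ?_⟩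
        have : z ∈ p.support := hsupp z hzs
        rw [Walk.cons_isPath_iff] at hq
        exact hq.2 this
      · intro e he
        rw [Walk.edges_cons] at he ⊢
        rcases List.mem_cons.mp he with rfl | he
        · exact List.mem_cons_self
        · exact List.mem_cons_of_mem _ (hedges e he)
      · intro v hv
        rw [Walk.support_cons] at hv ⊢
        rcases List.mem_cons.mp hv with rfl | hv
        · exact List.mem_cons_self
        · exact List.mem_cons_of_mem _ (hsupp v hv)
      · intro v hv hPv
        rw [Walk.support_cons] at hv
        rcases List.mem_cons.mp hv with rfl | hv
        · exact absurd hPv hz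
        · exact hlast v hv hPv

lemma walk_in_subgraph {G : SimpleGraph W} (T : G.Subgraph) (hT : T.Connected)
    {x y : W} (hx : x ∈ T.verts) (hy : y ∈ T.verts) :
    ∃ p : G.Walk x y, p.IsPath ∧ ∀ e ∈ p.edges, e ∈ T.edgeSet := by
  classical
  obtain ⟨w⟩ := hT ⟨x, hx⟩ ⟨y, hy⟩
  let p' := (w.toPath : T.coe.Path _ _)
  refine ⟨(p'.1.map T.hom), Walk.map_isPath_of_injective Subtype.val_injective p'.2, ?_⟩
  intro e he
  have he2 : e ∈ (p'.1.edges.map (Sym2.map T.hom)) := by rw [← Walk.edges_map]; exact he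
  obtain ⟨e', he', rfl⟩ := List.mem_map.mp he2
  have := p'.1.edges_subset_edgeSet he'
  rw [Subgraph.edgeSet_coe] at this
  exact this

lemma exists_median {G : SimpleGraph W} (T : G.Subgraph) (hT : T.Connected)
    (hfin : T.edgeSet.Finite) {x y z : W} (hx : x ∈ T.verts) (hy : y ∈ T.verts)
    (hz : z ∈ T.verts) :
    ∃ m, G.dist m x + G.dist m y + G.dist m z ≤ T.edgeSet.ncard := by
  classical
  obtain ⟨p, hp, hpE⟩ := walk_in_subgraph T hT hx hy
  obtain ⟨q, hq, hqE⟩ := walk_in_subgraph T hT hz hx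
  obtain ⟨m, hm, q₁, hq₁, hq₁e, -, hlast⟩ :=
    exists_first_hit (· ∈ p.support) q hq p.start_mem_support
  refine ⟨m, ?_⟩
  have hdx : G.dist m x ≤ (p.takeUntil m hm).length := by
    rw [SimpleGraph.dist_comm]; exact SimpleGraph.dist_le _
  have hdy : G.dist m y ≤ (p.dropUntil m hm).length := SimpleGraph.dist_le _
  have hdz : G.dist m z ≤ q₁.length := by
    rw [SimpleGraph.dist_comm]; exact SimpleGraph.dist_le _
  have hsplit : (p.takeUntil m hm).length + (p.dropUntil m hm).length = p.length := by
    rw [← Walk.length_append, Walk.take_spec]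
  -- edge counting
  have hdisj : ∀ e, e ∈ p.edges → e ∈ q₁.edges → False := by
    intro e hep heq
    induction e with
    | h u v =>
      have hu : u ∈ q₁.support := q₁.fst_mem_support_of_mem_edges heq
      have hv : v ∈ q₁.support := q₁.snd_mem_support_of_mem_edges heq
      have hup : u ∈ p.support := p.fst_mem_support_of_mem_edges hep
      have hvp : v ∈ p.support := p.snd_mem_support_of_mem_edges hep
      have hum := hlast u hu hup
      have hvm := hlast v hv hvp
      have hadj : G.Adj u v := p.adj_of_mem_edges hep
      rw [hum, hvm] at hadj
      exact G.irrefl hadj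
  have hnodup : (p.edges ++ q₁.edges).Nodup := by
    rw [List.nodup_append]
    exact ⟨hp.edges_nodup, hq₁.edges_nodup, fun e hep f hf hef => by subst hef; exact hdisj e hep hf⟩
  have hsubE : ∀ e ∈ p.edges ++ q₁.edges, e ∈ hfin.toFinset := by
    intro e he
    rw [Set.Finite.mem_toFinset]
    rcases List.mem_append.mp he with he | he
    · exact hpE e he
    · exact hqE e (hq₁e e he)
  have hlen : p.length + q₁.length ≤ T.edgeSet.ncard := by
    have h1 : (p.edges ++ q₁.edges).toFinset.card = p.length + q₁.length := by
      rw [List.toFinset_card_of_nodup hnodup, List.length_append,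
        Walk.length_edges, Walk.length_edges]
    have h2 : (p.edges ++ q₁.edges).toFinset ⊆ hfin.toFinset := by
      intro e he
      exact hsubE e (List.mem_toFinset.mp he)
    have := Finset.card_le_card h2
    rw [h1] at this
    rwa [Set.ncard_eq_toFinset_card _ hfin]
  omega

end Median

section ProdWalk

open SimpleGraph

variable {k : ℕ} {V : Fin k → Type*}

lemma boxProd_adj_update (G : ∀ i, SimpleGraph (V i)) (a : ∀ i, V i) (i : Fin k)
    {u v : V i} (h : (G i).Adj u v) :
    (boxProdFamily G).Adj (Function.update a i u) (Function.update a i v) := by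
  classical
  exact ⟨i, by simpa using h, fun j hj => by simp [Function.update_of_ne hj]⟩

lemma lift_walk (G : ∀ i, SimpleGraph (V i)) (a : ∀ i, V i) (i : Fin k)
    {u v : V i} (p : (G i).Walk u v) :
    ∃ q : (boxProdFamily G).Walk (Function.update a i u) (Function.update a i v),
      q.length = p.length := by
  induction p with
  | nil => exact ⟨Walk.nil, rfl⟩
  | cons h p ih =>
    obtain ⟨q, hq⟩ := ih
    exact ⟨Walk.cons (boxProd_adj_update G a i h) q, by simp [hq]⟩

lemma exists_walk_boxProd (G : ∀ i, SimpleGraph (V i)) (hconn : ∀ i, (G i).Connected)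
    (u v : ∀ i, V i) :
    ∃ q : (boxProdFamily G).Walk u v, q.length = ∑ i, (G i).dist (u i) (v i) := by
  classical
  suffices h : ∀ s : Finset (Fin k),
      ∃ q : (boxProdFamily G).Walk u (fun j => if j ∈ s then v j else u j),
        q.length = ∑ i ∈ s, (G i).dist (u i) (v i) by
    obtain ⟨q, hq⟩ := h Finset.univ
    have he : (fun j => if j ∈ Finset.univ then v j else u j) = v := by
      funext j; simp
    exact ⟨q.copy rfl he, by simpa using hq⟩
  intro s
  induction s using Finset.induction_on with
  | empty =>
    refine ⟨Walk.nil.copy rfl ?_, by simp⟩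
    funext j; simp
  | @insert i s hi ih =>
    obtain ⟨q, hq⟩ := ih
    obtain ⟨p, hp⟩ := (hconn i).exists_walk_length_eq_dist (u i) (v i)
    obtain ⟨q', hq'⟩ := lift_walk G (fun j => if j ∈ s then v j else u j) i p
    have h1 : Function.update (fun j => if j ∈ s then v j else u j) i (u i)
        = fun j => if j ∈ s then v j else u j := by
      funext j
      rcases eq_or_ne j i with rfl | hj
      · simp [hi]
      · simp [Function.update_of_ne hj]
    have h2 : Function.update (fun j => if j ∈ s then v j else u j) i (v i)
        = fun j => if j ∈ insert i s then v j else u j := by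
      funext j
      rcases eq_or_ne j i with rfl | hj
      · simp
      · simp [Function.update_of_ne hj, hj]
    refine ⟨q.append ((q'.copy h1 h2)), ?_⟩
    rw [Walk.length_append, Walk.length_copy, hq, hq', hp,
      Finset.sum_insert hi]
    omega

lemma ncard_toSubgraph_edgeSet_le {W : Type*} {G : SimpleGraph W} {u v : W} (p : G.Walk u v) :
    p.toSubgraph.edgeSet.ncard ≤ p.length := by
  classical
  rw [Walk.edgeSet_toSubgraph]
  have : p.edgeSet = ↑p.edges.toFinset := by ext e; simp
  rw [this, Set.ncard_coe_finset]
  exact le_trans (List.toFinset_card_le _) (le_of_eq p.length_edges)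

lemma tripod {W : Type*} {G : SimpleGraph W} {m x y z : W}
    (px : G.Walk m x) (py : G.Walk m y) (pz : G.Walk m z) :
    ∃ T : G.Subgraph, T.Connected ∧ x ∈ T.verts ∧ y ∈ T.verts ∧ z ∈ T.verts ∧
      T.edgeSet.ncard ≤ px.length + py.length + pz.length := by
  refine ⟨px.toSubgraph ⊔ py.toSubgraph ⊔ pz.toSubgraph, ?_, ?_, ?_, ?_, ?_⟩
  · refine Subgraph.connected_sup ?_ pz.toSubgraph_connected.preconnected ?_
    · refine (Subgraph.connected_sup px.toSubgraph_connected.preconnected py.toSubgraph_connected.preconnected ?_).preconnected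
      exact ⟨m, by simp [Subgraph.verts_inf, px.start_mem_verts_toSubgraph,
        py.start_mem_verts_toSubgraph]⟩
    · exact ⟨m, by simp [Subgraph.verts_inf, Subgraph.verts_sup,
        px.start_mem_verts_toSubgraph, pz.start_mem_verts_toSubgraph]⟩
  · simp [Subgraph.verts_sup, px.end_mem_verts_toSubgraph]
  · simp [Subgraph.verts_sup, py.end_mem_verts_toSubgraph]
  · simp [Subgraph.verts_sup, pz.end_mem_verts_toSubgraph]
  · rw [Subgraph.edgeSet_sup, Subgraph.edgeSet_sup]
    refine le_trans (Set.ncard_union_le _ _) ?_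
    have h1 := Set.ncard_union_le px.toSubgraph.edgeSet py.toSubgraph.edgeSet
    have h2 := ncard_toSubgraph_edgeSet_le px
    have h3 := ncard_toSubgraph_edgeSet_le py
    have h4 := ncard_toSubgraph_edgeSet_le pz
    omega

end ProdWalk

section Projection

open SimpleGraph

variable {k : ℕ} {V : Fin k → Type*}

/-- The projection of a subgraph of a box product onto the `i`-th coordinate. -/
def projSub (G : ∀ i, SimpleGraph (V i)) (T : (boxProdFamily G).Subgraph) (i : Fin k) :
    (G i).Subgraph where
  verts := (fun v => v i) '' T.verts
  Adj a b := (∃ u v, T.Adj u v ∧ u i = a ∧ v i = b) ∧ a ≠ b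
  adj_sub := by
    rintro a b ⟨⟨u, v, huv, rfl, rfl⟩, hne⟩
    obtain ⟨j, hadj, heq⟩ := T.adj_sub huv
    rcases eq_or_ne i j with rfl | hij
    · exact hadj
    · exact absurd (heq i hij) hne
  edge_vert := by
    rintro a b ⟨⟨u, v, huv, rfl, rfl⟩, hne⟩
    exact ⟨u, T.edge_vert huv, rfl⟩
  symm := by
    constructor
    rintro a b ⟨⟨u, v, huv, rfl, rfl⟩, hne⟩
    exact ⟨⟨v, u, huv.symm, rfl, rfl⟩, hne.symm⟩

lemma projSub_connected (G : ∀ i, SimpleGraph (V i)) {T : (boxProdFamily G).Subgraph}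
    (hT : T.Connected) (i : Fin k) : (projSub G T i).Connected := by
  have hmem : ∀ u ∈ T.verts, u i ∈ (projSub G T i).verts := fun u hu => ⟨u, hu, rfl⟩
  rw [Subgraph.connected_iff]
  refine ⟨Subgraph.Preconnected.mk ?_, ?_⟩
  · have key : ∀ (a b : T.verts) (w : T.coe.Walk a b),
        (projSub G T i).coe.Reachable ⟨a.1 i, hmem a.1 a.2⟩ ⟨b.1 i, hmem b.1 b.2⟩ := by
      intro a b w
      induction w with
      | nil => exact Reachable.refl _
      | @cons a c b h w ih =>
        refine Reachable.trans ?_ ih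
        have hadj : T.Adj a.1 c.1 := h
        rcases eq_or_ne (a.1 i) (c.1 i) with he | hne
        · rw [show (⟨a.1 i, hmem a.1 a.2⟩ : (projSub G T i).verts)
            = ⟨c.1 i, hmem c.1 c.2⟩ from Subtype.ext he]
        · exact SimpleGraph.Adj.reachable (by exact ⟨⟨a.1, c.1, hadj, rfl, rfl⟩, hne⟩)
    rintro ⟨a, u, hu, rfl⟩ ⟨b, v, hv, rfl⟩
    obtain ⟨w⟩ := hT ⟨u, hu⟩ ⟨v, hv⟩
    exact key _ _ w
  · obtain ⟨u, hu⟩ := hT.nonempty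
    exact ⟨u i, hmem u hu⟩

lemma sum_proj_ncard_le (G : ∀ i, SimpleGraph (V i)) [∀ i, Fintype (V i)]
    (T : (boxProdFamily G).Subgraph) :
    ∑ i, (projSub G T i).edgeSet.ncard ≤ T.edgeSet.ncard := by
  classical
  set D : Fin k → Set (Sym2 (∀ i, V i)) :=
    fun i => {e ∈ T.edgeSet | ¬ (Sym2.map (fun v => v i) e).IsDiag} with hD
  have himg : ∀ i, Sym2.map (fun v => v i) '' D i = (projSub G T i).edgeSet := by
    intro i
    ext e
    constructor
    · rintro ⟨e', ⟨he', hdiag⟩, rfl⟩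
      induction e' with
      | h u v =>
        rw [Sym2.map_pair_eq]
        rw [Sym2.map_pair_eq, Sym2.mk_isDiag_iff] at hdiag
        exact Subgraph.mem_edgeSet.mpr ⟨⟨u, v, Subgraph.mem_edgeSet.mp he', rfl, rfl⟩, hdiag⟩
    · intro he
      induction e with
      | h a b =>
        obtain ⟨⟨u, v, huv, rfl, rfl⟩, hne⟩ := Subgraph.mem_edgeSet.mp he
        refine ⟨s(u, v), ⟨Subgraph.mem_edgeSet.mpr huv, ?_⟩, Sym2.map_pair_eq _ _ _⟩
        rw [Sym2.map_pair_eq, Sym2.mk_isDiag_iff]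
        exact hne
  have hcover : T.edgeSet = ⋃ i, D i := by
    ext e
    simp only [Set.mem_iUnion, hD, Set.mem_setOf_eq]
    constructor
    · intro he
      induction e with
      | h u v =>
        obtain ⟨j, hadj, -⟩ := T.adj_sub (Subgraph.mem_edgeSet.mp he)
        exact ⟨j, he, by rw [Sym2.map_pair_eq, Sym2.mk_isDiag_iff]; exact hadj.ne⟩
    · rintro ⟨j, he, -⟩; exact he
  have hdisj : ∀ i j : Fin k, i ≠ j → ∀ e, e ∈ D i → e ∈ D j → False := by
    intro i j hij e hei hej
    induction e with
    | h u v =>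
      obtain ⟨hei, hdi⟩ := hei
      obtain ⟨hej, hdj⟩ := hej
      rw [Sym2.map_pair_eq, Sym2.mk_isDiag_iff] at hdi hdj
      obtain ⟨l, hadj, heq⟩ := T.adj_sub (Subgraph.mem_edgeSet.mp hei)
      rcases eq_or_ne i l with rfl | hil
      · exact hdj (heq j (Ne.symm hij))
      · exact hdi (heq i hil)
  -- Finset counting
  have hfinD : ∀ i, (D i).Finite := fun i => Set.toFinite _
  have hfinT : T.edgeSet.Finite := Set.toFinite _
  have hbi : hfinT.toFinset = Finset.univ.biUnion (fun i => (hfinD i).toFinset) := by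
    ext e
    simp only [Set.Finite.mem_toFinset, Finset.mem_biUnion, Finset.mem_univ, true_and]
    rw [hcover]
    simp only [Set.mem_iUnion, Set.Finite.mem_toFinset]
  have hcount : ∑ i, (D i).ncard = T.edgeSet.ncard := by
    rw [Set.ncard_eq_toFinset_card _ hfinT, hbi,
      Finset.card_biUnion]
    · refine Finset.sum_congr rfl fun i _ => ?_
      rw [Set.ncard_eq_toFinset_card _ (hfinD i)]
    · intro i _ j _ hij
      rw [Function.onFun, Finset.disjoint_left]
      intro e hei hej
      exact hdisj i j hij e ((hfinD i).mem_toFinset.mp hei) ((hfinD j).mem_toFinset.mp hej)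
  rw [← hcount]
  refine Finset.sum_le_sum fun i _ => ?_
  rw [← himg i]
  exact Set.ncard_image_le (hfinD i)

end Projection

section MainAux

open SimpleGraph

lemma steinerDist_mem {W : Type*} {G : SimpleGraph W} {S : Set W}
    (h : ∃ T : G.Subgraph, T.Connected ∧ S ⊆ T.verts) :
    ∃ T : G.Subgraph, T.Connected ∧ S ⊆ T.verts ∧ T.edgeSet.ncard = steinerDist G S := by
  obtain ⟨T0, hc, hs⟩ := h
  exact Nat.sInf_mem (⟨T0.edgeSet.ncard, T0, hc, hs, rfl⟩ :
    {n | ∃ T : G.Subgraph, T.Connected ∧ S ⊆ T.verts ∧ T.edgeSet.ncard = n}.Nonempty)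

end MainAux

/-- For `k ≥ 2` connected graphs `G₁, …, G_k`, each with at least 2 vertices,
the 3-Steiner diameter of their iterated Cartesian product is the sum of the
3-Steiner diameters: `sdiam₃(G₁ □ ⋯ □ G_k) = ∑ sdiam₃(Gᵢ)`. -/
theorem sdiam3_boxProdFamily {k : ℕ} (hk : 2 ≤ k) {V : Fin k → Type*}
    [∀ i, Fintype (V i)] (G : ∀ i, SimpleGraph (V i))
    (hconn : ∀ i, (G i).Connected) (hcard : ∀ i, 2 ≤ Fintype.card (V i)) :
    sdiam3 (boxProdFamily G) = ∑ i, sdiam3 (G i) := by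
  classical
  have hne : ∀ i, Nonempty (V i) := fun i =>
    Fintype.card_pos_iff.mp (lt_of_lt_of_le (by norm_num) (hcard i))
  haveI hnepi : Nonempty (∀ i, V i) := ⟨fun i => (hne i).some⟩
  apply le_antisymm
  · -- upper bound
    apply sdiam3_le
    intro S hS3
    obtain ⟨x, y, z, hSsub⟩ := exists_three_superset hS3 (Set.toFinite S)
    have hmed : ∀ i, ∃ m : V i,
        (G i).dist m (x i) + (G i).dist m (y i) + (G i).dist m (z i) ≤ sdiam3 (G i) := by
      intro i
      obtain ⟨pxy, -⟩ := (hconn i).exists_walk_length_eq_dist (x i) (y i)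
      obtain ⟨pxz, -⟩ := (hconn i).exists_walk_length_eq_dist (x i) (z i)
      obtain ⟨T0, hT0c, hT0x, hT0y, hT0z, -⟩ :=
        tripod (Walk.nil : (G i).Walk (x i) (x i)) pxy pxz
      have hsub0 : ({x i, y i, z i} : Set (V i)) ⊆ T0.verts := by
        intro w hw
        simp only [Set.mem_insert_iff, Set.mem_singleton_iff] at hw
        rcases hw with rfl | rfl | rfl <;> assumption
      obtain ⟨T, hTc, hTs, hTn⟩ := steinerDist_mem ⟨T0, hT0c, hsub0⟩
      obtain ⟨m, hm⟩ := exists_median T hTc (Set.toFinite _)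
        (hTs (Set.mem_insert _ _)) (hTs (Set.mem_insert_of_mem _ (Set.mem_insert _ _)))
        (hTs (Set.mem_insert_of_mem _ (Set.mem_insert_of_mem _ rfl)))
      refine ⟨m, le_trans ?_ (steinerDist_le_sdiam3 (G i) (ncard_triple_le (x i) (y i) (z i)))⟩
      rw [← hTn]
      exact hm
    choose m hm using hmed
    obtain ⟨px, hpx⟩ := exists_walk_boxProd G hconn m x
    obtain ⟨py, hpy⟩ := exists_walk_boxProd G hconn m y
    obtain ⟨pz, hpz⟩ := exists_walk_boxProd G hconn m z
    obtain ⟨T, hTc, hTx, hTy, hTz, hTcard⟩ := tripod px py pz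
    have hsub : S ⊆ T.verts := by
      refine hSsub.trans ?_
      intro w hw
      simp only [Set.mem_insert_iff, Set.mem_singleton_iff] at hw
      rcases hw with rfl | rfl | rfl <;> assumption
    refine le_trans (steinerDist_le_of_subgraph hTc hsub) ?_
    rw [hpx, hpy, hpz] at hTcard
    refine le_trans hTcard ?_
    rw [← Finset.sum_add_distrib, ← Finset.sum_add_distrib]
    exact Finset.sum_le_sum fun i _ => hm i
  · -- lower bound
    choose Si hSi3 hSid using fun i => exists_sdiam3_witness (G i)
    choose a b c habc using fun i =>
      @exists_three_superset (V i) (hne i) (Si i) (hSi3 i) (Set.toFinite _)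
    refine le_trans ?_ (steinerDist_le_sdiam3 (boxProdFamily G)
      (ncard_triple_le (a : ∀ i, V i) b c))
    obtain ⟨pab, -⟩ := exists_walk_boxProd G hconn a b
    obtain ⟨pac, -⟩ := exists_walk_boxProd G hconn a c
    obtain ⟨T0, hT0c, hT0a, hT0b, hT0c', -⟩ :=
      tripod (Walk.nil : (boxProdFamily G).Walk a a) pab pac
    have hsub0 : ({a, b, c} : Set (∀ i, V i)) ⊆ T0.verts := by
      intro w hw
      simp only [Set.mem_insert_iff, Set.mem_singleton_iff] at hw
      rcases hw with rfl | rfl | rfl <;> assumption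
    obtain ⟨T, hTc, hTs, hTn⟩ := steinerDist_mem ⟨T0, hT0c, hsub0⟩
    rw [← hTn]
    refine le_trans ?_ (sum_proj_ncard_le G T)
    refine Finset.sum_le_sum fun i _ => ?_
    rw [← hSid i]
    refine steinerDist_le_of_subgraph (projSub_connected G hTc i) ?_
    intro w hw
    have hw3 := habc i hw
    simp only [Set.mem_insert_iff, Set.mem_singleton_iff] at hw3
    rcases hw3 with rfl | rfl | rfl
    · exact ⟨a, hTs (Set.mem_insert _ _), rfl⟩
    · exact ⟨b, hTs (Set.mem_insert_of_mem _ (Set.mem_insert _ _)), rfl⟩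
    · exact ⟨c, hTs (Set.mem_insert_of_mem _ (Set.mem_insert_of_mem _ rfl)), rfl⟩
end

section
/- Let G and H be connected graphs, each with at least 2 vertices, such that rx_3(G) = sdiam_3(G) and rx_3(H) = sdiam_3(H). Then rx_3(G □ H) = rx_3(G) + rx_3(H). -/
open SimpleGraph

set_option linter.unusedSectionVars false

lemma cover3 {V : Type*} [Finite V] [Nonempty V] {S : Set V} (h : S.ncard ≤ 3) :
    ∃ x y z : V, S ⊆ {x, y, z} := by
  have hfin : S.Finite := Set.toFinite S
  interval_cases hn : S.ncard
  · obtain ⟨x⟩ := ‹Nonempty V›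
    exact ⟨x, x, x, by simp [(Set.ncard_eq_zero hfin).mp hn]⟩
  · obtain ⟨x, hx⟩ := (Set.ncard_eq_one).mp hn
    exact ⟨x, x, x, by simp [hx]⟩
  · obtain ⟨x, y, -, hxy⟩ := (Set.ncard_eq_two).mp hn
    exact ⟨x, x, y, by simp [hxy]⟩
  · obtain ⟨x, y, z, -, -, -, hxyz⟩ := (Set.ncard_eq_three).mp hn
    exact ⟨x, y, z, hxyz.le⟩

lemma triple_ncard_le {V : Type*} (x y z : V) : ({x, y, z} : Set V).ncard ≤ 3 := by
  calc ({x, y, z} : Set V).ncard ≤ ({y, z} : Set V).ncard + 1 := Set.ncard_insert_le _ _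
    _ ≤ (({z} : Set V).ncard + 1) + 1 := add_le_add_left (Set.ncard_insert_le _ _) 1
    _ ≤ 3 := by simp [Set.ncard_singleton]

lemma top_subgraph_connected {V : Type*} {G : SimpleGraph V} (hG : G.Connected) :
    (⊤ : G.Subgraph).Connected := by
  rw [Subgraph.connected_iff_forall_exists_walk_subgraph]
  have : Nonempty V := hG.nonempty
  refine ⟨⟨Classical.arbitrary V, by simp⟩, ?_⟩
  intro u v _ _
  obtain ⟨p⟩ := hG.preconnected u v
  exact ⟨p, le_top⟩

lemma rx3_mem {V : Type*} [Fintype V] {G : SimpleGraph V} (hG : G.Connected) :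
    rx3 G ∈ {n | ∃ c : Sym2 V → ℕ, (∀ e ∈ G.edgeSet, c e < n) ∧ IsRainbowColoring3 G c} := by
  apply Nat.sInf_mem
  classical
  set s : Finset (Sym2 V) := G.edgeSet.toFinite.toFinset with hs
  refine ⟨s.card, fun e => if h : e ∈ s then (s.equivFin ⟨e, h⟩ : ℕ) else 0, ?_, ?_⟩
  · intro e he
    have h1 : e ∈ s := G.edgeSet.toFinite.mem_toFinset.mpr he
    show (if h : e ∈ s then (s.equivFin ⟨e, h⟩ : ℕ) else 0) < s.card
    rw [dif_pos h1]
    exact (s.equivFin _).2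
  · intro S _
    refine ⟨⊤, top_subgraph_connected hG, by simp, ?_⟩
    intro e he e' he' hce
    rw [Subgraph.edgeSet_top] at he he'
    have h1 : e ∈ s := G.edgeSet.toFinite.mem_toFinset.mpr he
    have h2 : e' ∈ s := G.edgeSet.toFinite.mem_toFinset.mpr he'
    have hce' : (s.equivFin ⟨e, h1⟩ : ℕ) = (s.equivFin ⟨e', h2⟩ : ℕ) := by
      simpa only [dif_pos h1, dif_pos h2] using hce
    have := (s.equivFin).injective (Fin.val_injective hce')
    exact Subtype.ext_iff.mp this

lemma steinerDist_le {V : Type*} {G : SimpleGraph V} {T : G.Subgraph} {S : Set V}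
    (h1 : T.Connected) (h2 : S ⊆ T.verts) : steinerDist G S ≤ T.edgeSet.ncard :=
  Nat.sInf_le ⟨T, h1, h2, rfl⟩

lemma sdiam3_le_rx3 {V : Type*} [Fintype V] {G : SimpleGraph V} (hG : G.Connected) :
    sdiam3 G ≤ rx3 G := by
  obtain ⟨c, hlt, hrb⟩ := rx3_mem hG
  refine csSup_le ⟨steinerDist G ∅, ⟨∅, by simp, rfl⟩⟩ ?_
  rintro n ⟨S, hS, rfl⟩
  obtain ⟨T, hTc, hTv, hTi⟩ := hrb S hS
  refine (steinerDist_le hTc hTv).trans ?_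
  calc T.edgeSet.ncard = (c '' T.edgeSet).ncard := (Set.ncard_image_of_injOn hTi).symm
    _ ≤ (Set.Iio (rx3 G)).ncard := by
        apply Set.ncard_le_ncard _ (Set.finite_Iio _)
        rintro _ ⟨e, he, rfl⟩
        exact hlt e (T.edgeSet_subset he)
    _ = rx3 G := by
        rw [← Nat.card_coe_set_eq, Nat.card_eq_fintype_card, ← Set.toFinset_card, Set.toFinset_Iio, Nat.card_Iio]

section proj
open SimpleGraph
variable {α β : Type*} {G : SimpleGraph α} {H : SimpleGraph β}

/-- Projection of a subgraph of a box product to the first factor. -/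
def projFst (T : (G □ H).Subgraph) : G.Subgraph where
  verts := Prod.fst '' T.verts
  Adj g g' := ∃ b, T.Adj (g, b) (g', b)
  adj_sub := by
    rintro g g' ⟨b, hb⟩
    have := T.adj_sub hb
    rw [boxProd_adj] at this
    rcases this with ⟨h, -⟩ | ⟨h, -⟩
    · exact h
    · exact absurd h (H.irrefl)
  edge_vert := by rintro g g' ⟨b, hb⟩; exact ⟨(g, b), T.edge_vert hb, rfl⟩
  symm := ⟨by rintro g g' ⟨b, hb⟩; exact ⟨b, hb.symm⟩⟩

/-- Projection of a subgraph of a box product to the second factor. -/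
def projSnd (T : (G □ H).Subgraph) : H.Subgraph where
  verts := Prod.snd '' T.verts
  Adj b b' := ∃ g, T.Adj (g, b) (g, b')
  adj_sub := by
    rintro b b' ⟨g, hg⟩
    have := T.adj_sub hg
    rw [boxProd_adj] at this
    rcases this with ⟨h, -⟩ | ⟨h, -⟩
    · exact absurd h (G.irrefl)
    · exact h
  edge_vert := by rintro b b' ⟨g, hg⟩; exact ⟨(g, b), T.edge_vert hg, rfl⟩
  symm := ⟨by rintro b b' ⟨g, hg⟩; exact ⟨g, hg.symm⟩⟩

lemma projFst_connected {T : (G □ H).Subgraph} (hT : T.Connected) :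
    (projFst T).Connected := by
  rw [Subgraph.connected_iff_forall_exists_walk_subgraph] at hT
  obtain ⟨⟨x, hx⟩, hT⟩ := hT
  rw [Subgraph.connected_iff]
  constructor
  · rw [Subgraph.preconnected_iff]
    rintro ⟨g, hg⟩ ⟨g', hg'⟩
    obtain ⟨u, hu, rfl⟩ := hg
    obtain ⟨v, hv, rfl⟩ := hg'
    obtain ⟨p, hp⟩ := hT hu hv
    suffices hkey : ∀ (h1 : u.1 ∈ (projFst T).verts) (h2 : v.1 ∈ (projFst T).verts),
        (projFst T).coe.Reachable ⟨u.1, h1⟩ ⟨v.1, h2⟩ from hkey _ _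
    clear hu hv
    induction p with
    | nil =>
      intro h1 h2; exact Reachable.refl _
    | @cons a b c hab p ih =>
      intro h1 h2
      simp only [Walk.toSubgraph, sup_le_iff] at hp
      have hTab : T.Adj a b := hp.1.2 (by simp [SimpleGraph.subgraphOfAdj])
      have hb : b.1 ∈ (projFst T).verts := ⟨b, T.edge_vert hTab.symm, rfl⟩
      have hreach := ih hp.2 hb h2
      have := T.adj_sub hTab
      rw [boxProd_adj] at this
      rcases this with ⟨hadj, hsnd⟩ | ⟨hadj, hfst⟩
      · refine Reachable.trans ?_ hreach
        apply Adj.reachable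
        show (projFst T).Adj a.1 b.1
        refine ⟨a.2, ?_⟩
        have : (b.1, a.2) = b := by rw [hsnd]
        rwa [this]
      · have : (⟨a.1, h1⟩ : (projFst T).verts) = ⟨b.1, hb⟩ := Subtype.ext hfst
        rw [this]
        exact hreach
  · exact ⟨x.1, ⟨x, hx, rfl⟩⟩

lemma projSnd_connected {T : (G □ H).Subgraph} (hT : T.Connected) :
    (projSnd T).Connected := by
  rw [Subgraph.connected_iff_forall_exists_walk_subgraph] at hT
  obtain ⟨⟨x, hx⟩, hT⟩ := hT
  rw [Subgraph.connected_iff]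
  constructor
  · rw [Subgraph.preconnected_iff]
    rintro ⟨g, hg⟩ ⟨g', hg'⟩
    obtain ⟨u, hu, rfl⟩ := hg
    obtain ⟨v, hv, rfl⟩ := hg'
    obtain ⟨p, hp⟩ := hT hu hv
    suffices hkey : ∀ (h1 : u.2 ∈ (projSnd T).verts) (h2 : v.2 ∈ (projSnd T).verts),
        (projSnd T).coe.Reachable ⟨u.2, h1⟩ ⟨v.2, h2⟩ from hkey _ _
    clear hu hv
    induction p with
    | nil =>
      intro h1 h2; exact Reachable.refl _
    | @cons a b c hab p ih =>
      intro h1 h2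
      simp only [Walk.toSubgraph, sup_le_iff] at hp
      have hTab : T.Adj a b := hp.1.2 (by simp [SimpleGraph.subgraphOfAdj])
      have hb : b.2 ∈ (projSnd T).verts := ⟨b, T.edge_vert hTab.symm, rfl⟩
      have hreach := ih hp.2 hb h2
      have := T.adj_sub hTab
      rw [boxProd_adj] at this
      rcases this with ⟨hadj, hsnd⟩ | ⟨hadj, hfst⟩
      · have : (⟨a.2, h1⟩ : (projSnd T).verts) = ⟨b.2, hb⟩ := Subtype.ext hsnd
        rw [this]
        exact hreach
      · refine Reachable.trans ?_ hreach
        apply Adj.reachable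
        show (projSnd T).Adj a.2 b.2
        refine ⟨a.1, ?_⟩
        have : (a.1, b.2) = b := by rw [hfst]
        rwa [this]
  · exact ⟨x.2, ⟨x, hx, rfl⟩⟩
end proj

section lower
open SimpleGraph
variable {α β : Type*} [Fintype α] [Fintype β] {G : SimpleGraph α} {H : SimpleGraph β}

lemma proj_edge_count (T : (G □ H).Subgraph) :
    (projFst T).edgeSet.ncard + (projSnd T).edgeSet.ncard ≤ T.edgeSet.ncard := by
  classical
  set EG : Set (Sym2 (α × β)) := {e ∈ T.edgeSet | ¬ (Sym2.map Prod.fst e).IsDiag} with hEG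
  set EH : Set (Sym2 (α × β)) := {e ∈ T.edgeSet | (Sym2.map Prod.fst e).IsDiag} with hEH
  have hsub1 : (projFst T).edgeSet ⊆ Sym2.map Prod.fst '' EG := by
    intro e he
    induction e with
    | h x y =>
      rw [Subgraph.mem_edgeSet] at he
      obtain ⟨b, hb⟩ := he
      refine ⟨s((x, b), (y, b)), ⟨Subgraph.mem_edgeSet.mpr hb, ?_⟩, by simp⟩
      simp only [Sym2.map_pair_eq, Sym2.mk_isDiag_iff]
      exact fun hxy => ((projFst T).adj_sub ⟨b, hb⟩).ne hxy
  have hsub2 : (projSnd T).edgeSet ⊆ Sym2.map Prod.snd '' EH := by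
    intro e he
    induction e with
    | h x y =>
      rw [Subgraph.mem_edgeSet] at he
      obtain ⟨g, hg⟩ := he
      refine ⟨s((g, x), (g, y)), ⟨Subgraph.mem_edgeSet.mpr hg, ?_⟩, by simp⟩
      simp only [Sym2.map_pair_eq, Sym2.mk_isDiag_iff]
  have h1 : (projFst T).edgeSet.ncard ≤ EG.ncard :=
    (Set.ncard_le_ncard hsub1 ((Set.toFinite EG).image _)).trans
      (Set.ncard_image_le (Set.toFinite EG))
  have h2 : (projSnd T).edgeSet.ncard ≤ EH.ncard :=
    (Set.ncard_le_ncard hsub2 ((Set.toFinite EH).image _)).trans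
      (Set.ncard_image_le (Set.toFinite EH))
  have hunion : EG ∪ EH = T.edgeSet := by
    ext e; simp only [hEG, hEH, Set.mem_union, Set.mem_setOf_eq]; tauto
  have hdisj : Disjoint EG EH := by
    rw [Set.disjoint_left]
    rintro e ⟨-, h1⟩ ⟨-, h2⟩
    exact h1 h2
  calc (projFst T).edgeSet.ncard + (projSnd T).edgeSet.ncard ≤ EG.ncard + EH.ncard :=
        add_le_add h1 h2
    _ = T.edgeSet.ncard := by
        rw [← Set.ncard_union_eq hdisj (Set.toFinite EG) (Set.toFinite EH), hunion]

lemma steiner_add_le (hG : G.Connected) (hH : H.Connected)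
    {SG : Set α} {SH : Set β} (g1 g2 g3 : α) (h1 h2 h3 : β)
    (hSG : SG ⊆ {g1, g2, g3}) (hSH : SH ⊆ {h1, h2, h3}) :
    steinerDist G SG + steinerDist H SH ≤
      steinerDist (G □ H) {(g1, h1), (g2, h2), (g3, h3)} := by
  refine le_csInf ⟨(⊤ : (G □ H).Subgraph).edgeSet.ncard,
    ⟨⊤, top_subgraph_connected (hG.boxProd hH), by simp [Subgraph.verts_top], rfl⟩⟩ ?_
  rintro n ⟨T, hTc, hTv, rfl⟩
  have hverts : ∀ i : Fin 3, (![(g1, h1), (g2, h2), (g3, h3)] i) ∈ T.verts := by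
    intro i
    apply hTv
    fin_cases i <;> simp
  have hvG : SG ⊆ (projFst T).verts := by
    intro x hx
    rcases hSG hx with h | h | h
    · rw [h]; exact ⟨(g1, h1), hverts 0, rfl⟩
    · rw [h]; exact ⟨(g2, h2), hverts 1, rfl⟩
    · rw [h]; exact ⟨(g3, h3), hverts 2, rfl⟩
  have hvH : SH ⊆ (projSnd T).verts := by
    intro x hx
    rcases hSH hx with h | h | h
    · rw [h]; exact ⟨(g1, h1), hverts 0, rfl⟩
    · rw [h]; exact ⟨(g2, h2), hverts 1, rfl⟩
    · rw [h]; exact ⟨(g3, h3), hverts 2, rfl⟩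
  calc steinerDist G SG + steinerDist H SH
      ≤ (projFst T).edgeSet.ncard + (projSnd T).edgeSet.ncard :=
        add_le_add (steinerDist_le (projFst_connected hTc) hvG)
          (steinerDist_le (projSnd_connected hTc) hvH)
    _ ≤ T.edgeSet.ncard := proj_edge_count T

lemma sdiam3_mem (G : SimpleGraph α) :
    ∃ S : Set α, S.ncard ≤ 3 ∧ steinerDist G S = sdiam3 G := by
  have hfin : {n | ∃ S : Set α, S.ncard ≤ 3 ∧ steinerDist G S = n}.Finite := by
    apply (Set.finite_range (fun S : Set α => steinerDist G S)).subset
    rintro n ⟨S, -, rfl⟩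
    exact ⟨S, rfl⟩
  have hne : {n | ∃ S : Set α, S.ncard ≤ 3 ∧ steinerDist G S = n}.Nonempty :=
    ⟨steinerDist G ∅, ∅, by simp, rfl⟩
  exact hne.csSup_mem hfin

lemma sdiam3_bddAbove (G : SimpleGraph α) :
    BddAbove {n | ∃ S : Set α, S.ncard ≤ 3 ∧ steinerDist G S = n} := by
  apply Set.Finite.bddAbove
  apply (Set.finite_range (fun S : Set α => steinerDist G S)).subset
  rintro n ⟨S, -, rfl⟩
  exact ⟨S, rfl⟩

lemma sdiam3_add_le (hG : G.Connected) (hH : H.Connected) :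
    sdiam3 G + sdiam3 H ≤ sdiam3 (G □ H) := by
  have : Nonempty α := hG.nonempty
  have : Nonempty β := hH.nonempty
  obtain ⟨SG, hSG3, hSGd⟩ := sdiam3_mem G
  obtain ⟨SH, hSH3, hSHd⟩ := sdiam3_mem H
  obtain ⟨g1, g2, g3, hg⟩ := cover3 hSG3
  obtain ⟨h1, h2, h3, hh⟩ := cover3 hSH3
  rw [← hSGd, ← hSHd]
  refine (steiner_add_le hG hH g1 g2 g3 h1 h2 h3 hg hh).trans ?_
  exact le_csSup (sdiam3_bddAbove _)
    ⟨{(g1, h1), (g2, h2), (g3, h3)}, triple_ncard_le _ _ _, rfl⟩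
end lower

section firstmeet
open SimpleGraph
variable {V : Type*} {G : SimpleGraph V}

lemma exists_first_meet {u v : V} (p : G.Walk u v) (Q : Set V) (hv : v ∈ Q) :
    ∃ m, m ∈ Q ∧ ∃ r : G.Walk m u, (∀ e ∈ r.edges, e ∈ p.edges) ∧
      (∀ x ∈ r.support, x ∈ Q → x = m) := by
  induction p with
  | nil => exact ⟨_, hv, Walk.nil, by simp, by simp⟩
  | @cons u w v hadj p ih =>
    by_cases hu : u ∈ Q
    · exact ⟨u, hu, Walk.nil, by simp, by simp⟩
    · obtain ⟨m, hm, r, hre, hrs⟩ := ih hv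
      refine ⟨m, hm, r.append (Walk.cons hadj.symm Walk.nil), ?_, ?_⟩
      · intro e he
        rw [Walk.edges_append] at he
        rcases List.mem_append.mp he with h | h
        · exact List.mem_cons_of_mem _ (hre e h)
        · simp only [Walk.edges_cons, Walk.edges_nil, List.mem_singleton] at h
          rw [h, Sym2.eq_swap]
          exact List.mem_cons_self
      · intro x hx hxQ
        rw [Walk.support_append] at hx
        rcases List.mem_append.mp hx with h | h
        · exact hrs x h hxQ
        · simp only [Walk.support_cons, Walk.support_nil, List.tail_cons,
            List.mem_singleton] at h
          rw [h] at hxQ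
          exact absurd hxQ hu
end firstmeet

section upper
open SimpleGraph
variable {α β : Type*} [Fintype α] [Fintype β] {G : SimpleGraph α} {H : SimpleGraph β}

lemma rx3_boxProd_le (hG : G.Connected) (hH : H.Connected) :
    rx3 (G □ H) ≤ rx3 G + rx3 H := by
  classical
  obtain ⟨cG, hltG, hrbG⟩ := rx3_mem hG
  obtain ⟨cH, hltH, hrbH⟩ := rx3_mem hH
  set nG := rx3 G
  set nH := rx3 H
  have hfsymm : ∀ x y : α × β,
      (if x.1 = y.1 then nG + cH s(x.2, y.2) else cG s(x.1, y.1)) =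
      (if y.1 = x.1 then nG + cH s(y.2, x.2) else cG s(y.1, x.1)) := by
    intro x y
    by_cases h : x.1 = y.1
    · rw [if_pos h, if_pos h.symm, Sym2.eq_swap]
    · rw [if_neg h, if_neg (Ne.symm h), Sym2.eq_swap]
  set c : Sym2 (α × β) → ℕ :=
    Sym2.lift ⟨fun x y => if x.1 = y.1 then nG + cH s(x.2, y.2) else cG s(x.1, y.1),
      hfsymm⟩ with hc
  have hcmk : ∀ x y : α × β,
      c s(x, y) = if x.1 = y.1 then nG + cH s(x.2, y.2) else cG s(x.1, y.1) := by
    intro x y; rw [hc, Sym2.lift_mk]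
  apply Nat.sInf_le
  refine ⟨c, ?_, ?_⟩
  · -- colors bounded
    intro e he
    induction e with
    | h x y =>
      rw [mem_edgeSet, boxProd_adj] at he
      rw [hcmk]
      rcases he with ⟨hadj, -⟩ | ⟨hadj, heq⟩
      · rw [if_neg hadj.ne]
        exact lt_of_lt_of_le (hltG _ hadj) (Nat.le_add_right _ _)
      · rw [if_pos heq]
        exact Nat.add_lt_add_left (hltH _ hadj) _
  · -- rainbow property
    intro S hS
    have : Nonempty α := hG.nonempty
    have : Nonempty β := hH.nonempty
    obtain ⟨a1, a2, a3, hcov⟩ := cover3 hS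
    obtain ⟨TG, hTGc, hTGv, hTGi⟩ := hrbG {a1.1, a2.1, a3.1} (triple_ncard_le _ _ _)
    obtain ⟨TH, hTHc, hTHv, hTHi⟩ := hrbH {a1.2, a2.2, a3.2} (triple_ncard_le _ _ _)
    obtain ⟨pg12, hpg12⟩ := ((Subgraph.connected_iff_forall_exists_walk_subgraph TG).mp
      hTGc).2 (hTGv (by simp : a1.1 ∈ _)) (hTGv (by simp : a2.1 ∈ _))
    obtain ⟨pg23, hpg23⟩ := ((Subgraph.connected_iff_forall_exists_walk_subgraph TG).mp
      hTGc).2 (hTGv (by simp : a2.1 ∈ _)) (hTGv (by simp : a3.1 ∈ _))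
    obtain ⟨p, hp⟩ := ((Subgraph.connected_iff_forall_exists_walk_subgraph TH).mp
      hTHc).2 (hTHv (by simp : a1.2 ∈ _)) (hTHv (by simp : a2.2 ∈ _))
    obtain ⟨q0, hq0⟩ := ((Subgraph.connected_iff_forall_exists_walk_subgraph TH).mp
      hTHc).2 (hTHv (by simp : a2.2 ∈ _)) (hTHv (by simp : a3.2 ∈ _))
    have hpg12e : ∀ e ∈ pg12.edges, e ∈ TG.edgeSet :=
      fun e he => (Subgraph.edgeSet_mono hpg12) (pg12.mem_edges_toSubgraph.mpr he)
    have hpg23e : ∀ e ∈ pg23.edges, e ∈ TG.edgeSet :=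
      fun e he => (Subgraph.edgeSet_mono hpg23) (pg23.mem_edges_toSubgraph.mpr he)
    have hpe : ∀ e ∈ p.edges, e ∈ TH.edgeSet :=
      fun e he => (Subgraph.edgeSet_mono hp) (p.mem_edges_toSubgraph.mpr he)
    set q := q0.bypass with hqdef
    have hqpath : q.IsPath := q0.bypass_isPath
    have hqe : ∀ e ∈ q.edges, e ∈ TH.edgeSet :=
      fun e he => (Subgraph.edgeSet_mono hq0)
        (q0.mem_edges_toSubgraph.mpr (q0.edges_bypass_subset he))
    obtain ⟨m, hmq', L1, hL1e, hL1s⟩ :=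
      exists_first_meet p {x | x ∈ q.support} q.start_mem_support
    have hmq : m ∈ q.support := hmq'
    set L2 := (q.takeUntil m hmq).reverse with hL2def
    set L3 := q.dropUntil m hmq with hL3def
    have hL1T : ∀ e ∈ L1.edges, e ∈ TH.edgeSet := fun e he => hpe e (hL1e e he)
    have hL2q : ∀ e ∈ L2.edges, e ∈ q.edges := by
      intro e he
      rw [hL2def, Walk.edges_reverse, List.mem_reverse] at he
      exact q.edges_takeUntil_subset hmq he
    have hL3q : ∀ e ∈ L3.edges, e ∈ q.edges :=
      fun e he => q.edges_dropUntil_subset hmq he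
    have hL2T : ∀ e ∈ L2.edges, e ∈ TH.edgeSet := fun e he => hqe e (hL2q e he)
    have hL3T : ∀ e ∈ L3.edges, e ∈ TH.edgeSet := fun e he => hqe e (hL3q e he)
    -- disjointness of the legs
    have hd23 : ∀ e, e ∈ L2.edges → e ∈ L3.edges → False := by
      have hnd : q.edges.Nodup := hqpath.edges_nodup
      have hsplit : q.edges = (q.takeUntil m hmq).edges ++ (q.dropUntil m hmq).edges := by
        rw [← Walk.edges_append, Walk.take_spec]
      rw [hsplit] at hnd
      have hdisj := List.disjoint_of_nodup_append hnd
      intro e he2 he3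
      rw [hL2def, Walk.edges_reverse, List.mem_reverse] at he2
      exact hdisj he2 he3
    have hd1q : ∀ e, e ∈ L1.edges → e ∈ q.edges → False := by
      intro e
      induction e with
      | h x y =>
        intro he1 heq
        have hx1 : x ∈ L1.support := L1.fst_mem_support_of_mem_edges he1
        have hy1 : y ∈ L1.support := L1.snd_mem_support_of_mem_edges he1
        have hxq : x ∈ q.support := q.fst_mem_support_of_mem_edges heq
        have hyq : y ∈ q.support := q.snd_mem_support_of_mem_edges heq
        have hx := hL1s x hx1 hxq
        have hy := hL1s y hy1 hyq
        rw [hx, hy] at heq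
        exact H.irrefl ((SimpleGraph.mem_edgeSet H).mp (q.edges_subset_edgeSet heq))
    have hd12 : ∀ e, e ∈ L1.edges → e ∈ L2.edges → False :=
      fun e h1 h2 => hd1q e h1 (hL2q e h2)
    have hd13 : ∀ e, e ∈ L1.edges → e ∈ L3.edges → False :=
      fun e h1 h2 => hd1q e h1 (hL3q e h2)
    -- walks in the box product
    set ιL : G →g G □ H := (G.boxProdLeft H m).toHom with hιL
    set ι : α → (H →g G □ H) := fun g => (G.boxProdRight H g).toHom with hι
    -- color computations
    have hcompL : ∀ eG ∈ TG.edgeSet, c (Sym2.map ιL eG) = cG eG := by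
      intro eG heG
      induction eG with
      | h x y =>
        have hadj : G.Adj x y := TG.adj_sub (Subgraph.mem_edgeSet.mp heG)
        rw [Sym2.map_pair_eq]
        have h1 : ιL x = (x, m) := rfl
        have h2 : ιL y = (y, m) := rfl
        rw [h1, h2, hcmk]
        exact if_neg hadj.ne
    have hcompR : ∀ (g : α), ∀ eH ∈ TH.edgeSet,
        c (Sym2.map (ι g) eH) = nG + cH eH := by
      intro g eH heH
      induction eH with
      | h x y =>
        rw [Sym2.map_pair_eq]
        have h1 : ι g x = (g, x) := rfl
        have h2 : ι g y = (g, y) := rfl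
        rw [h1, h2, hcmk]
        exact if_pos rfl
    -- edge decomposition of the layer walk
    have hedgeL : ∀ e ∈ ((pg12.append pg23).map ιL).edges,
        ∃ eG, eG ∈ TG.edgeSet ∧ e = Sym2.map ιL eG := by
      intro e he
      rw [Walk.edges_map] at he
      obtain ⟨eG, heG, rfl⟩ := List.mem_map.mp he
      rw [Walk.edges_append, List.mem_append] at heG
      exact ⟨eG, heG.elim (hpg12e eG) (hpg23e eG), rfl⟩
    refine ⟨((pg12.append pg23).map ιL).toSubgraph ⊔ (L1.map (ι a1.1)).toSubgraph
      ⊔ (L2.map (ι a2.1)).toSubgraph ⊔ (L3.map (ι a3.1)).toSubgraph, ?_, ?_, ?_⟩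
    · -- connectivity
      have hc1 : (((pg12.append pg23).map ιL).toSubgraph
          ⊔ (L1.map (ι a1.1)).toSubgraph).Connected := by
        refine Subgraph.connected_sup (Walk.toSubgraph_connected _).preconnected (Walk.toSubgraph_connected _).preconnected
          ⟨(a1.1, m), ?_⟩
        rw [Subgraph.verts_inf]
        exact ⟨Walk.start_mem_verts_toSubgraph _, Walk.start_mem_verts_toSubgraph _⟩
      have hc2 : (((pg12.append pg23).map ιL).toSubgraph ⊔ (L1.map (ι a1.1)).toSubgraph
          ⊔ (L2.map (ι a2.1)).toSubgraph).Connected := by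
        refine Subgraph.connected_sup hc1.preconnected (Walk.toSubgraph_connected _).preconnected ⟨(a2.1, m), ?_⟩
        rw [Subgraph.verts_inf, Subgraph.verts_sup]
        refine ⟨Or.inl ?_, Walk.start_mem_verts_toSubgraph _⟩
        rw [Walk.mem_verts_toSubgraph, Walk.support_map]
        refine List.mem_map.mpr ⟨a2.1, ?_, rfl⟩
        rw [Walk.mem_support_append_iff]
        exact Or.inl pg12.end_mem_support
      refine Subgraph.connected_sup hc2.preconnected (Walk.toSubgraph_connected _).preconnected ⟨(a3.1, m), ?_⟩
      rw [Subgraph.verts_inf, Subgraph.verts_sup, Subgraph.verts_sup]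
      refine ⟨Or.inl (Or.inl ?_), Walk.start_mem_verts_toSubgraph _⟩
      rw [Walk.mem_verts_toSubgraph, Walk.support_map]
      exact List.mem_map.mpr ⟨a3.1, (pg12.append pg23).end_mem_support, rfl⟩
    · -- S is contained in the vertices
      intro x hx
      simp only [Subgraph.verts_sup, Set.mem_union]
      rcases hcov hx with h | h | h <;> rw [h]
      · exact Or.inl (Or.inl (Or.inr ((L1.map (ι a1.1)).end_mem_verts_toSubgraph)))
      · exact Or.inl (Or.inr ((L2.map (ι a2.1)).end_mem_verts_toSubgraph))
      · exact Or.inr ((L3.map (ι a3.1)).end_mem_verts_toSubgraph)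
    · -- injectivity of the coloring on the edge set
      have hgen : ∀ (gA gB : α) {xA xB : β} (LA : H.Walk m xA) (LB : H.Walk m xB),
          (∀ e ∈ LA.edges, e ∈ TH.edgeSet) → (∀ e ∈ LB.edges, e ∈ TH.edgeSet) →
          (∀ e, e ∈ LA.edges → e ∈ LB.edges → gA = gB) →
          ∀ e1 e2 : Sym2 (α × β), e1 ∈ (LA.map (ι gA)).edges →
            e2 ∈ (LB.map (ι gB)).edges → c e1 = c e2 → e1 = e2 := by
        intro gA gB xA xB LA LB hA hB hAB e1 e2 he1 he2 hc12
        rw [Walk.edges_map] at he1 he2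
        obtain ⟨f1, hf1, rfl⟩ := List.mem_map.mp he1
        obtain ⟨f2, hf2, rfl⟩ := List.mem_map.mp he2
        rw [hcompR gA f1 (hA f1 hf1), hcompR gB f2 (hB f2 hf2)] at hc12
        have hf12 : f1 = f2 := hTHi (hA f1 hf1) (hB f2 hf2) (Nat.add_left_cancel hc12)
        subst hf12
        rw [hAB f1 hf1 hf2]
      have hLC : ∀ {x : β} (g : α) (L : H.Walk m x),
          (∀ e ∈ L.edges, e ∈ TH.edgeSet) →
          ∀ e1 ∈ ((pg12.append pg23).map ιL).edges, ∀ e2 ∈ (L.map (ι g)).edges,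
            c e1 = c e2 → e1 = e2 := by
        intro x g L hL e1 he1 e2 he2 hc12
        exfalso
        obtain ⟨eG, hGm, rfl⟩ := hedgeL _ he1
        rw [Walk.edges_map] at he2
        obtain ⟨eH, hHm, rfl⟩ := List.mem_map.mp he2
        rw [hcompL _ hGm, hcompR _ _ (hL _ hHm)] at hc12
        have := hltG eG (TG.edgeSet_subset hGm)
        omega
      intro e1 he1 e2 he2 hc12
      simp only [Subgraph.edgeSet_sup, Set.mem_union, Walk.mem_edges_toSubgraph] at he1 he2
      rcases he1 with ((h1 | h1) | h1) | h1 <;> rcases he2 with ((h2 | h2) | h2) | h2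
      · obtain ⟨eG1, hG1, rfl⟩ := hedgeL _ h1
        obtain ⟨eG2, hG2, rfl⟩ := hedgeL _ h2
        rw [hcompL _ hG1, hcompL _ hG2] at hc12
        rw [hTGi hG1 hG2 hc12]
      · exact hLC _ _ hL1T e1 h1 e2 h2 hc12
      · exact hLC _ _ hL2T e1 h1 e2 h2 hc12
      · exact hLC _ _ hL3T e1 h1 e2 h2 hc12
      · exact (hLC _ _ hL1T e2 h2 e1 h1 hc12.symm).symm
      · exact hgen _ _ _ _ hL1T hL1T (fun _ _ _ => rfl) e1 e2 h1 h2 hc12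
      · exact hgen _ _ _ _ hL1T hL2T (fun e ha hb => (hd12 e ha hb).elim) e1 e2 h1 h2 hc12
      · exact hgen _ _ _ _ hL1T hL3T (fun e ha hb => (hd13 e ha hb).elim) e1 e2 h1 h2 hc12
      · exact (hLC _ _ hL2T e2 h2 e1 h1 hc12.symm).symm
      · exact hgen _ _ _ _ hL2T hL1T (fun e ha hb => (hd12 e hb ha).elim) e1 e2 h1 h2 hc12
      · exact hgen _ _ _ _ hL2T hL2T (fun _ _ _ => rfl) e1 e2 h1 h2 hc12
      · exact hgen _ _ _ _ hL2T hL3T (fun e ha hb => (hd23 e ha hb).elim) e1 e2 h1 h2 hc12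
      · exact (hLC _ _ hL3T e2 h2 e1 h1 hc12.symm).symm
      · exact hgen _ _ _ _ hL3T hL1T (fun e ha hb => (hd13 e hb ha).elim) e1 e2 h1 h2 hc12
      · exact hgen _ _ _ _ hL3T hL2T (fun e ha hb => (hd23 e hb ha).elim) e1 e2 h1 h2 hc12
      · exact hgen _ _ _ _ hL3T hL3T (fun _ _ _ => rfl) e1 e2 h1 h2 hc12
end upper


/-- If `G` and `H` are connected graphs, each with at least 2 vertices, with
`rx₃(G) = sdiam₃(G)` and `rx₃(H) = sdiam₃(H)`, then
`rx₃(G □ H) = rx₃(G) + rx₃(H)`. -/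
theorem rx3_boxProd_eq {α β : Type*} [Fintype α] [Fintype β]
    (G : SimpleGraph α) (H : SimpleGraph β) (hG : G.Connected) (hH : H.Connected)
    (hα : 2 ≤ Fintype.card α) (hβ : 2 ≤ Fintype.card β)
    (hGeq : rx3 G = sdiam3 G) (hHeq : rx3 H = sdiam3 H) :
    rx3 (G □ H) = rx3 G + rx3 H := by
  refine le_antisymm (rx3_boxProd_le hG hH) ?_
  calc rx3 G + rx3 H = sdiam3 G + sdiam3 H := by rw [hGeq, hHeq]
    _ ≤ sdiam3 (G □ H) := sdiam3_add_le hG hH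
    _ ≤ rx3 (G □ H) := sdiam3_le_rx3 (hG.boxProd hH)
end
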